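/- arXiv:0710.1797 — 6 statements merged into one kernel-verified Lean document; each statement's English description precedes it below -/
import Mathlib

section
/- Let n, t be positive integers with t ≤ n. Suppose ℬ is a family of t-element subsets of {1,...,n} and G is a subgroup of the group (𝒫({1,...,n}), Δ) (power set under symmetric difference) of order 2^t such that every nonempty element of G intersects every member of ℬ. If 𝒜 ⊆ 𝒫({1,...,n}) is a family such that for all A, A' ∈ 𝒜 there exists B ∈ ℬ with B ∩ (A Δ A') = ∅, then |𝒜| ≤ 2^{n-t}. -/
open Finset
open scoped symmDiff Classical

/-- The cyclic block of length `t` modulo `n` starting at `a`, i.e. `{a+1,...,a+t}`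
reduced modulo `n` into `{1,...,n}`. -/
def cyclicBlock (n t a : ℕ) : Finset ℕ :=
  (Finset.range t).image (fun j => (a + j) % n + 1)

instance : Std.Commutative (α := Finset ℕ) (· ∆ ·) := ⟨symmDiff_comm⟩
instance : Std.Associative (α := Finset ℕ) (· ∆ ·) := ⟨symmDiff_assoc⟩

/-- Iterated symmetric difference `∆_{i ∈ I} g i`. -/
def symmDiffs (I : Finset ℕ) (g : ℕ → Finset ℕ) : Finset ℕ :=
  I.fold (· ∆ ·) ∅ g

/-!
Proof idea: `G` is a subgroup of the elementary abelian 2-group `(𝒫([n]), ∆)`, so its cosets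
`A ∆ G` all have `2 ^ t` elements. Two distinct members `A, A'` of `𝒜` lie in different cosets:
otherwise `A ∆ A'` is a nonempty element of `G`, hence meets every `B ∈ ℬ`, contradicting the
choice of `B` with `B ∩ (A ∆ A') = ∅`. The cosets of the members of `𝒜` are therefore disjoint
subsets of `𝒫([n])`, so `|𝒜| · 2 ^ t ≤ 2 ^ n`.
-/

section SymmDiffCoset

variable {β : Type*} [GeneralizedBooleanAlgebra β] [DecidableEq β]

theorem card_image_symmDiff (a : β) (G : Finset β) : (G.image (a ∆ ·)).card = G.card :=
  card_image_of_injective _ (symmDiff_right_injective a)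

theorem disjoint_image_symmDiff_of_symmDiff_notMem {G : Finset β}
    (hG : ∀ g ∈ G, ∀ h ∈ G, g ∆ h ∈ G) {a b : β} (hab : a ∆ b ∉ G) :
    Disjoint (G.image (a ∆ ·)) (G.image (b ∆ ·)) := by
  simp only [disjoint_left, mem_image, not_exists, not_and]
  rintro _ ⟨g, hg, rfl⟩ h hh hgh
  have : a ∆ b = g ∆ h := by
    rw [← symmDiff_eq_bot, symmDiff_symmDiff_symmDiff_comm, ← hgh,
      symmDiff_symmDiff_symmDiff_comm, symmDiff_self, symmDiff_self, symmDiff_bot]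
  exact hab (this ▸ hG g hg h hh)

theorem card_mul_card_le_of_symmDiff_notMem {G 𝒜 U : Finset β}
    (hG : ∀ g ∈ G, ∀ h ∈ G, g ∆ h ∈ G) (h𝒜 : ∀ a ∈ 𝒜, ∀ b ∈ 𝒜, a ≠ b → a ∆ b ∉ G)
    (hU : ∀ a ∈ 𝒜, ∀ g ∈ G, a ∆ g ∈ U) :
    𝒜.card * G.card ≤ U.card := by
  have hdisj : (𝒜 : Set β).PairwiseDisjoint (fun a => G.image (a ∆ ·)) :=
    fun a ha b hb hab => disjoint_image_symmDiff_of_symmDiff_notMem hG (h𝒜 a ha b hb hab)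
  calc 𝒜.card * G.card = (𝒜.biUnion fun a => G.image (a ∆ ·)).card := by
        rw [card_biUnion hdisj, sum_congr rfl fun a _ => card_image_symmDiff a G, sum_const,
          smul_eq_mul]
    _ ≤ U.card := card_le_card <| by
        simp only [subset_iff, mem_biUnion, mem_image]
        rintro _ ⟨a, ha, g, hg, rfl⟩
        exact hU a ha g hg

end SymmDiffCoset

theorem stmt1_general (n t : ℕ) (htn : t ≤ n)
    (ℬ : Finset (Finset ℕ))
    (G : Finset (Finset ℕ)) (hGsub : G ⊆ (Finset.Icc 1 n).powerset)
    (hGclosed : ∀ g ∈ G, ∀ h ∈ G, g ∆ h ∈ G)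
    (hGcard : G.card = 2 ^ t)
    (hGmeet : ∀ g ∈ G, g ≠ ∅ → ∀ B ∈ ℬ, (g ∩ B).Nonempty)
    (𝒜 : Finset (Finset ℕ)) (hA : 𝒜 ⊆ (Finset.Icc 1 n).powerset)
    (hagree : ∀ A ∈ 𝒜, ∀ A' ∈ 𝒜, ∃ B ∈ ℬ, B ∩ (A ∆ A') = ∅) :
    𝒜.card ≤ 2 ^ (n - t) := by
  have hcoset : ∀ A ∈ 𝒜, ∀ A' ∈ 𝒜, A ≠ A' → A ∆ A' ∉ G := by
    intro A hA₁ A' hA₂ hne hmem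
    obtain ⟨B, hB, hdisj⟩ := hagree A hA₁ A' hA₂
    have := hGmeet _ hmem (symmDiff_eq_bot.not.mpr hne) B hB
    rw [inter_comm, hdisj] at this
    exact not_nonempty_empty this
  have hU : ∀ A ∈ 𝒜, ∀ g ∈ G, A ∆ g ∈ (Icc 1 n).powerset := fun A hA₁ g hg =>
    mem_powerset.mpr <| symmDiff_le (le_sup_of_le_right (mem_powerset.mp (hA hA₁)))
      (le_sup_of_le_right (mem_powerset.mp (hGsub hg)))
  have hcount := card_mul_card_le_of_symmDiff_notMem hGclosed hcoset hU
  rw [card_powerset, Nat.card_Icc, Nat.add_sub_cancel, hGcard,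
    ← Nat.sub_add_cancel htn, pow_add] at hcount
  exact Nat.le_of_mul_le_mul_right hcount (by positivity)

theorem stmt1 (n t : ℕ) (ht : 0 < t) (htn : t ≤ n)
    (ℬ : Finset (Finset ℕ)) (hB : ∀ B ∈ ℬ, B ⊆ Finset.Icc 1 n ∧ B.card = t)
    (G : Finset (Finset ℕ)) (hGsub : G ⊆ (Finset.Icc 1 n).powerset)
    (hGzero : ∅ ∈ G) (hGclosed : ∀ g ∈ G, ∀ h ∈ G, g ∆ h ∈ G)
    (hGcard : G.card = 2 ^ t)
    (hGmeet : ∀ g ∈ G, g ≠ ∅ → ∀ B ∈ ℬ, (g ∩ B).Nonempty)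
    (𝒜 : Finset (Finset ℕ)) (hA : 𝒜 ⊆ (Finset.Icc 1 n).powerset)
    (hagree : ∀ A ∈ 𝒜, ∀ A' ∈ 𝒜, ∃ B ∈ ℬ, B ∩ (A ∆ A') = ∅) :
    𝒜.card ≤ 2 ^ (n - t) :=
  stmt1_general n t htn ℬ G hGsub hGclosed hGcard hGmeet 𝒜 hA hagree
end

section
/- Let n = qt + 1 with q, t positive integers. For i ∈ {1,...,t}, define g_i = {x ∈ {1,...,n} : x ≡ i (mod t)} ∪ {n}. Let G be the subgroup of (𝒫({1,...,n}), Δ) generated by g_1,...,g_t. Then every nonempty element of G intersects every cyclic block of length t modulo n. -/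
open Finset
open scoped symmDiff Classical

/-!
Write `S = ∆_{i ∈ I} g_i`. Since `1, …, t` have distinct residues modulo `t`, a point `x < n`
lies in `S` exactly when its residue is that of some `i ∈ I`, while `n ∈ S` iff `#I` is odd.
Because `n - 1 = qt ≡ 0`, the block `{a+1, …, a+t}` taken modulo `n` carries, besides possibly
`n`, points of every residue except `a mod t` when it wraps around, and of every residue when it
does not. So the block meets `S` unless it contains `n` and every `i ∈ I` has residue `a mod t`;
then `I` is a singleton, and `n` is a common point.
-/

theorem mem_symmDiffs {I : Finset ℕ} {g : ℕ → Finset ℕ} {x : ℕ} :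
    x ∈ symmDiffs I g ↔ Odd #{i ∈ I | x ∈ g i} := by
  induction I using Finset.induction with
  | empty => simp [symmDiffs]
  | insert a I ha ih =>
    rw [symmDiffs, fold_insert ha, mem_symmDiff, ← symmDiffs, ih, filter_insert]
    by_cases hx : x ∈ g a
    · rw [if_pos hx, card_insert_of_notMem fun h => ha (mem_filter.mp h).1]
      simp [hx, Nat.odd_add_one]
    · simp [hx]

theorem Nat.mod_injOn_Icc (t : ℕ) : Set.InjOn (· % t) (Icc 1 t : Set ℕ) := by
  intro i hi j hj h
  simp only [coe_Icc, Set.mem_Icc] at hi hj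
  exact Nat.ModEq.eq_of_abs_lt h (by rw [abs_sub_lt_iff]; omega)

theorem Nat.exists_mem_Ioc_mod_eq (a : ℕ) {t r : ℕ} (hr : r < t) :
    ∃ m ∈ Set.Ioc a (a + t), m % t = r := by
  have hdiv := Nat.div_add_mod (a + t - r) t
  have hmod := Nat.mod_lt (a + t - r) (r.zero_le.trans_lt hr)
  exact ⟨t * ((a + t - r) / t) + r, ⟨by omega, by omega⟩,
    by rw [Nat.mul_add_mod, Nat.mod_eq_of_lt hr]⟩

section Blocks

variable {n t a : ℕ}

theorem sub_one_mod_add_one_mem_cyclicBlock {m : ℕ} (ham : a < m) (hmt : m ≤ a + t) :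
    (m - 1) % n + 1 ∈ cyclicBlock n t a :=
  mem_image.mpr ⟨m - 1 - a, mem_range.mpr (by omega), by rw [Nat.add_sub_cancel' (by omega)]⟩

theorem mem_cyclicBlock_of_le {m : ℕ} (ham : a < m) (hmt : m ≤ a + t) (hmn : m ≤ n) :
    m ∈ cyclicBlock n t a := by
  simpa [Nat.mod_eq_of_lt (show m - 1 < n by omega), Nat.sub_add_cancel (show 1 ≤ m by omega)]
    using sub_one_mod_add_one_mem_cyclicBlock (n := n) ham hmt

theorem self_mem_cyclicBlock (han : a < n) (hnt : n ≤ a + t) : n ∈ cyclicBlock n t a :=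
  mem_cyclicBlock_of_le han hnt le_rfl

theorem exists_mem_cyclicBlock_mod_eq {q r : ℕ} (hq : 0 < q) (hn : n = q * t + 1)
    (han : a < n) (hr : r < t) (hra : r ≠ a % t ∨ a + t < n) :
    ∃ x ∈ cyclicBlock n t a, 1 ≤ x ∧ x < n ∧ x % t = r := by
  obtain ⟨m, ⟨ham, hmt⟩, hmr⟩ := Nat.exists_mem_Ioc_mod_eq a hr
  rcases Nat.lt_or_ge m n with hmn | hnm
  · exact ⟨m, mem_cyclicBlock_of_le ham hmt hmn.le, by omega, hmn, hmr⟩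
  · -- the point `m + 1` of `{a+1, …, a+t}` wraps to `m + 1 - n = m - qt ≡ m`
    have hmt' : m + 1 ≤ a + t := by
      rcases hra with hra | hra
      · refine lt_of_le_of_ne hmt fun hm => hra ?_
        rw [← hmr, hm, Nat.add_mod_right]
      · omega
    have htq : t ≤ q * t := Nat.le_mul_of_pos_left t hq
    have hx : (m + 1 - 1) % n + 1 = m - q * t := by
      rw [Nat.add_sub_cancel, Nat.mod_eq_sub_mod hnm, Nat.mod_eq_of_lt (by omega)]
      omega
    refine ⟨m - q * t, hx ▸ sub_one_mod_add_one_mem_cyclicBlock (by omega) hmt', by omega,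
      by omega, ?_⟩
    rw [← hmr, mul_comm, Nat.sub_mul_mod (by linarith)]

end Blocks

section Generators

variable {n t : ℕ} {g : ℕ → Finset ℕ} {I : Finset ℕ}

theorem mem_symmDiffs_of_mod_eq
    (hg : ∀ i, g i = (Finset.Icc 1 n).filter (fun x => x % t = i % t) ∪ {n})
    (hI : I ⊆ Icc 1 t) {i x : ℕ} (hi : i ∈ I) (hx1 : 1 ≤ x) (hxn : x < n)
    (hxi : x % t = i % t) : x ∈ symmDiffs I g := by
  have hfilter : {j ∈ I | x ∈ g j} = {i} := by
    refine eq_singleton_iff_unique_mem.mpr ⟨mem_filter.mpr ⟨hi, ?_⟩, fun j hj => ?_⟩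
    · simp [hg, hx1, hxn.le, hxi]
    · obtain ⟨hj, hxj⟩ := mem_filter.mp hj
      simp only [hg, mem_union, mem_filter, mem_singleton, hxn.ne, or_false] at hxj
      exact Nat.mod_injOn_Icc t (hI hj) (hI hi) (hxj.2.symm.trans hxi)
  simp [mem_symmDiffs, hfilter]

theorem self_mem_symmDiffs
    (hg : ∀ i, g i = (Finset.Icc 1 n).filter (fun x => x % t = i % t) ∪ {n})
    (hI : Odd #I) : n ∈ symmDiffs I g := by
  rwa [mem_symmDiffs, filter_true_of_mem fun j _ => by simp [hg]]

end Generators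

theorem stmt3 (n q t : ℕ) (hq : 0 < q) (ht : 0 < t) (hn : n = q * t + 1)
    (g : ℕ → Finset ℕ)
    (hg : ∀ i, g i = (Finset.Icc 1 n).filter (fun x => x % t = i % t) ∪ {n}) :
    ∀ I ⊆ Finset.Icc 1 t, symmDiffs I g ≠ ∅ →
      ∀ a < n, (symmDiffs I g ∩ cyclicBlock n t a).Nonempty := by
  intro I hI hS a ha
  obtain ⟨i₀, hi₀⟩ : I.Nonempty := nonempty_iff_ne_empty.mpr (by rintro rfl; exact hS rfl)
  by_cases hres : ∃ i ∈ I, i % t ≠ a % t ∨ a + t < n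
  · obtain ⟨i, hi, hia⟩ := hres
    obtain ⟨x, hxB, hx1, hxn, hxi⟩ :=
      exists_mem_cyclicBlock_mod_eq hq hn ha (Nat.mod_lt i ht) hia
    exact ⟨x, mem_inter.mpr ⟨mem_symmDiffs_of_mod_eq hg hI hi hx1 hxn hxi, hxB⟩⟩
  · push Not at hres
    have hI₀ : I = {i₀} := eq_singleton_iff_unique_mem.mpr ⟨hi₀, fun j hj =>
      Nat.mod_injOn_Icc t (hI hj) (hI hi₀) ((hres j hj).1.trans (hres i₀ hi₀).1.symm)⟩
    exact ⟨n, mem_inter.mpr ⟨self_mem_symmDiffs hg (by simp [hI₀]),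
      self_mem_cyclicBlock ha (hres i₀ hi₀).2⟩⟩
end

section
/- Let n, t, r, q be positive integers with n = qt + r and r dividing t. For i ∈ {1,...,t}, define g_i = {x ∈ {1,...,n} : x ≡ i (mod t)} ∪ {x ∈ {1,...,n} : x > n - r and x ≡ i (mod r)}. Let G be the subgroup of (𝒫({1,...,n}), Δ) generated by g_1,...,g_t. Then |G| = 2^t and every nonempty element of G intersects every cyclic block of length t modulo n. -/
open Finset
open scoped symmDiff Classical

lemma mem_symmDiffs_iff_odd_card {g : ℕ → Finset ℕ} {x : ℕ} (I : Finset ℕ) :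
    x ∈ symmDiffs I g ↔ Odd #{i ∈ I | x ∈ g i} := by
  induction I using Finset.induction_on with
  | empty => simp [symmDiffs]
  | insert a s has ih =>
    rw [show symmDiffs (insert a s) g = g a ∆ symmDiffs s g from fold_insert has,
      mem_symmDiff, ih, filter_insert]
    by_cases hx : x ∈ g a
    · rw [if_pos hx, card_insert_of_notMem (fun h => has (mem_filter.mp h).1)]
      simp only [hx, true_and, not_true_eq_false, and_false, or_false, Nat.odd_iff]
      omega
    · simp [hx]

lemma eq_of_mod_eq_of_mem_Icc {t i j : ℕ} (hi : i ∈ Icc 1 t) (hj : j ∈ Icc 1 t)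
    (h : i % t = j % t) : i = j := by
  rw [mem_Icc] at hi hj
  rcases le_total i j with hij | hij
  · have := Nat.eq_zero_of_dvd_of_lt ((Nat.modEq_iff_dvd' hij).mp h) (by omega)
    omega
  · have := Nat.eq_zero_of_dvd_of_lt ((Nat.modEq_iff_dvd' hij).mp h.symm) (by omega)
    omega

lemma add_le_of_dvd_of_lt {r m t : ℕ} (hm : r ∣ m) (ht : r ∣ t) (hmt : m < t) :
    m + r ≤ t := by
  have := Nat.le_of_dvd (Nat.sub_pos_of_lt hmt) (Nat.dvd_sub ht hm)
  omega

/-- The generator `g_i`. -/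
def generator (n t r i : ℕ) : Finset ℕ :=
  (Icc 1 n).filter (fun x => x % t = i % t ∨ (n - r < x ∧ x % r = i % r))

section Generators

variable {n t r : ℕ} {I : Finset ℕ}

lemma mem_symmDiffs_generator_of_le_sub (hI : I ⊆ Icc 1 t) {x i : ℕ} (hx : x ∈ Icc 1 (n - r))
    (hi : i ∈ Icc 1 t) (hxi : x % t = i % t) :
    x ∈ symmDiffs I (generator n t r) ↔ i ∈ I := by
  rw [mem_Icc] at hx
  have hfilter : {j ∈ I | x ∈ generator n t r j} = {j ∈ I | j = i} := by
    refine filter_congr fun j hj => ?_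
    simp only [generator, mem_filter, mem_Icc]
    constructor
    · rintro ⟨-, hj' | hj'⟩
      · exact eq_of_mod_eq_of_mem_Icc (hI hj) hi (hj'.symm.trans hxi)
      · omega
    · rintro rfl
      exact ⟨by omega, Or.inl hxi⟩
  rw [mem_symmDiffs_iff_odd_card, hfilter, filter_eq']
  split_ifs with h <;> simp [h]

lemma mem_symmDiffs_generator_of_sub_lt (hrt : r ∣ t) {x : ℕ} (hx : n - r < x) (hxn : x ≤ n) :
    x ∈ symmDiffs I (generator n t r) ↔ Odd #{i ∈ I | i % r = x % r} := by
  rw [mem_symmDiffs_iff_odd_card]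
  congr! 3 with i
  simp only [generator, mem_filter, mem_Icc]
  constructor
  · rintro ⟨-, h | h⟩
    · exact (Nat.ModEq.of_dvd hrt h).symm
    · exact h.2.symm
  · intro h
    exact ⟨⟨by omega, hxn⟩, Or.inr ⟨hx, h.symm⟩⟩

lemma injOn_symmDiffs_generator (htn : t ≤ n - r) :
    Set.InjOn (fun I => symmDiffs I (generator n t r)) ((Icc 1 t).powerset : Set (Finset ℕ)) := by
  intro I hI J hJ (hIJ : symmDiffs I _ = symmDiffs J _)
  simp only [coe_powerset, Set.mem_preimage, Set.mem_powerset_iff, coe_subset] at hI hJ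
  ext i
  by_cases hi : i ∈ Icc 1 t
  · have hx : i ∈ Icc 1 (n - r) := by simp only [mem_Icc] at hi ⊢; omega
    rw [← mem_symmDiffs_generator_of_le_sub hI hx hi rfl,
      ← mem_symmDiffs_generator_of_le_sub hJ hx hi rfl, hIJ]
  · exact iff_of_false (fun h => hi (hI h)) (fun h => hi (hJ h))

end Generators

/-- The position of `x ∈ {1,…,n}` in `cyclicBlock n t a`, counted from `0`. -/
def blockOffset (n a x : ℕ) : ℕ := (x + (n - 1 - a)) % n

section Blocks

variable {n t a : ℕ}

lemma mem_cyclicBlock_iff (ha : a < n) (htn : t ≤ n) {x : ℕ} (hx : x ∈ Icc 1 n) :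
    x ∈ cyclicBlock n t a ↔ blockOffset n a x < t := by
  rw [mem_Icc] at hx
  simp only [cyclicBlock, mem_image, mem_range, blockOffset]
  constructor
  · rintro ⟨j, hj, rfl⟩
    rw [show (a + j) % n + 1 + (n - 1 - a) = (a + j) % n + (n - a) by omega, Nat.mod_add_mod,
      show a + j + (n - a) = j + n by omega, Nat.add_mod_right, Nat.mod_eq_of_lt (by omega)]
    exact hj
  · intro h
    refine ⟨_, h, ?_⟩
    rw [Nat.add_mod_mod, show a + (x + (n - 1 - a)) = x - 1 + n by omega, Nat.add_mod_right,
      Nat.mod_eq_of_lt (by omega)]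
    omega

lemma blockOffset_add (x δ : ℕ) : blockOffset n a (x + δ) = (blockOffset n a x + δ) % n := by
  rw [blockOffset, blockOffset, Nat.mod_add_mod]
  ring_nf

end Blocks

lemma exists_mod_add_mul_lt_of_notMem_Ico {n q t r c : ℕ} (hn : n = q * t + r) (hq : 0 < q)
    (hc : c < n) (hgood : c ∉ Ico t (t + r)) : ∃ k < q, (c + k * t) % n < t := by
  rw [mem_Ico, not_and_or, not_le, not_lt] at hgood
  rcases hgood with hct | hc'
  · exact ⟨0, hq, by rwa [zero_mul, add_zero, Nat.mod_eq_of_lt hc]⟩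
  have ht : 0 < t := Nat.pos_of_ne_zero fun h => by simp [h] at hn; omega
  -- `d + 1` is the number of steps of length `t` that carry `c` past `n`
  have hd := Nat.mod_add_div (n - 1 - c) t
  set d := (n - 1 - c) / t
  have hlt := Nat.mod_lt (n - 1 - c) ht
  have hdq : d < q - 1 := (Nat.div_lt_iff_lt_mul ht).2 (by rw [Nat.sub_one_mul]; omega)
  refine ⟨d + 1, by omega, ?_⟩
  rw [show c + (d + 1) * t = n + (t - 1 - (n - 1 - c) % t) by rw [add_mul, mul_comm]; omega,
    Nat.add_mod_left, Nat.mod_eq_of_lt (by omega)]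
  omega

lemma mod_add_notMem_Ico_of_mem_Ico {n t r c δ : ℕ} (hn : t + r ≤ n) (hc : c ∈ Ico t (t + r))
    (hδ : r ≤ δ) (hδ' : δ + r ≤ t) : (c + δ) % n ∉ Ico t (t + r) := by
  rw [mem_Ico] at hc ⊢
  by_cases h : c + δ < n
  · rw [Nat.mod_eq_of_lt h]
    omega
  · rw [Nat.mod_eq_sub_mod (by omega), Nat.mod_eq_of_lt (by omega)]
    omega

section Intersection

variable {n q t r a : ℕ} {I : Finset ℕ}

lemma inter_cyclicBlock_nonempty_of_notMem_Ico (hn : n = q * t + r) (hq : 0 < q) (ha : a < n)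
    (hI : I ⊆ Icc 1 t) {i : ℕ} (hi : i ∈ I) (hgood : blockOffset n a i ∉ Ico t (t + r)) :
    (symmDiffs I (generator n t r) ∩ cyclicBlock n t a).Nonempty := by
  have hi' := mem_Icc.1 (hI hi)
  have htq : t ≤ q * t := Nat.le_mul_of_pos_left t hq
  obtain ⟨k, hkq, hk⟩ :=
    exists_mod_add_mul_lt_of_notMem_Ico hn hq (Nat.mod_lt _ (by omega)) hgood
  have hkt : k * t + t ≤ q * t := by
    rw [← Nat.succ_mul]
    exact Nat.mul_le_mul_right t hkq
  have hy : i + k * t ∈ Icc 1 (n - r) := mem_Icc.2 ⟨by omega, by omega⟩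
  refine ⟨i + k * t, mem_inter.2 ⟨?_, ?_⟩⟩
  · exact (mem_symmDiffs_generator_of_le_sub hI hy (hI hi) (Nat.add_mul_mod_self_right _ _ _)).2 hi
  · rw [mem_cyclicBlock_iff ha (by omega) (mem_Icc.2 ⟨by omega, by omega⟩), blockOffset_add]
    exact hk

lemma inter_cyclicBlock_nonempty_of_odd (hrt : r ∣ t) (hrn : r ∣ n) (htrn : t + r ≤ n)
    (ha : a < n) (hI : I ⊆ Icc 1 t) {i : ℕ} (hi : i ∈ I)
    (hbad : blockOffset n a i ∈ Ico t (t + r)) (hodd : Odd #{j ∈ I | j % r = i % r}) :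
    (symmDiffs I (generator n t r) ∩ cyclicBlock n t a).Nonempty := by
  have hi' := mem_Icc.1 (hI hi)
  rw [mem_Ico] at hbad
  have hr : 0 < r := Nat.pos_of_dvd_of_pos hrt (by omega)
  have hmod := Nat.mod_lt (i - 1) hr
  have hdiv := Nat.mod_add_div (i - 1) r
  set m := r * ((i - 1) / r)
  have hmt : m + r ≤ t := add_le_of_dvd_of_lt (dvd_mul_right r _) hrt (by omega)
  -- the element of the last `r` positions in the residue class of `i` modulo `r`
  refine ⟨i + (n - r - m), mem_inter.2 ⟨?_, ?_⟩⟩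
  · rw [mem_symmDiffs_generator_of_sub_lt hrt (by omega) (by omega)]
    obtain ⟨k, hk⟩ : r ∣ n - r - m :=
      Nat.dvd_sub (Nat.dvd_sub hrn dvd_rfl) (dvd_mul_right _ _)
    rwa [hk, Nat.add_mul_mod_self_left]
  · rw [mem_cyclicBlock_iff ha (by omega) (mem_Icc.2 ⟨by omega, by omega⟩), blockOffset_add,
      Nat.mod_eq_sub_mod (by omega), Nat.mod_eq_of_lt (by omega)]
    omega

lemma blockOffset_notMem_Ico_of_mod_eq (hrt : r ∣ t) (htrn : t + r ≤ n) {i j : ℕ}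
    (hi : 0 < i) (hj : j ≤ t) (hij : i < j) (hmod : j % r = i % r)
    (hbad : blockOffset n a i ∈ Ico t (t + r)) : blockOffset n a j ∉ Ico t (t + r) := by
  have hdvd : r ∣ j - i := (Nat.modEq_iff_dvd' hij.le).1 hmod.symm
  rw [show j = i + (j - i) by omega, blockOffset_add]
  exact mod_add_notMem_Ico_of_mem_Ico htrn hbad (Nat.le_of_dvd (by omega) hdvd)
    (add_le_of_dvd_of_lt hdvd hrt (by omega))

lemma exists_blockOffset_notMem_Ico_of_even (hrt : r ∣ t) (htrn : t + r ≤ n)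
    (hI : I ⊆ Icc 1 t) {i : ℕ} (hi : i ∈ I) (heven : ¬Odd #{j ∈ I | j % r = i % r}) :
    ∃ j ∈ I, blockOffset n a j ∉ Ico t (t + r) := by
  have hpos : 0 < #{j ∈ I | j % r = i % r} := card_pos.2 ⟨i, mem_filter.2 ⟨hi, rfl⟩⟩
  have hcard : 1 < #{j ∈ I | j % r = i % r} := by
    obtain ⟨k, hk⟩ := Nat.not_odd_iff_even.1 heven
    omega
  obtain ⟨j, hj, hji⟩ := exists_mem_ne hcard i
  rw [mem_filter] at hj
  have hi' := mem_Icc.1 (hI hi)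
  have hj' := mem_Icc.1 (hI hj.1)
  rcases lt_or_gt_of_ne hji with hlt | hlt
  · by_cases hbad : blockOffset n a j ∈ Ico t (t + r)
    · exact ⟨i, hi, blockOffset_notMem_Ico_of_mod_eq hrt htrn hj'.1 hi'.2 hlt hj.2.symm hbad⟩
    · exact ⟨j, hj.1, hbad⟩
  · by_cases hbad : blockOffset n a i ∈ Ico t (t + r)
    · exact ⟨j, hj.1, blockOffset_notMem_Ico_of_mod_eq hrt htrn hi'.1 hj'.2 hlt hj.2 hbad⟩
    · exact ⟨i, hi, hbad⟩

end Intersection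

theorem stmt5_general (n q t r : ℕ) (hq : 0 < q)
    (hn : n = q * t + r) (hrt : r ∣ t)
    (g : ℕ → Finset ℕ)
    (hg : ∀ i, g i = (Finset.Icc 1 n).filter
      (fun x => x % t = i % t ∨ (n - r < x ∧ x % r = i % r))) :
    ((Finset.Icc 1 t).powerset.image (fun I => symmDiffs I g)).card = 2 ^ t ∧
    (∀ I ⊆ Finset.Icc 1 t, symmDiffs I g ≠ ∅ →
      ∀ a < n, (symmDiffs I g ∩ cyclicBlock n t a).Nonempty) := by
  obtain rfl : g = generator n t r := funext hg
  have htq : t ≤ q * t := Nat.le_mul_of_pos_left t hq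
  refine ⟨?_, fun I hI hne a ha => ?_⟩
  · rw [card_image_of_injOn (injOn_symmDiffs_generator (by omega)), card_powerset, Nat.card_Icc,
      Nat.add_sub_cancel]
  obtain ⟨i, hi⟩ : I.Nonempty := nonempty_iff_ne_empty.2 fun h => hne (by simp [h, symmDiffs])
  have hrn : r ∣ n := hn ▸ dvd_add (dvd_mul_of_dvd_right hrt q) dvd_rfl
  by_cases hgood : blockOffset n a i ∉ Ico t (t + r)
  · exact inter_cyclicBlock_nonempty_of_notMem_Ico hn hq ha hI hi hgood
  by_cases hodd : Odd #{j ∈ I | j % r = i % r}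
  · exact inter_cyclicBlock_nonempty_of_odd hrt hrn (by omega) ha hI hi (not_not.1 hgood) hodd
  obtain ⟨j, hj, hjgood⟩ :=
    exists_blockOffset_notMem_Ico_of_even (n := n) (a := a) hrt (by omega) hI hi hodd
  exact inter_cyclicBlock_nonempty_of_notMem_Ico hn hq ha hI hj hjgood

theorem stmt5 (n q t r : ℕ) (hq : 0 < q) (ht : 0 < t) (hr : 0 < r)
    (hn : n = q * t + r) (hrt : r ∣ t)
    (g : ℕ → Finset ℕ)
    (hg : ∀ i, g i = (Finset.Icc 1 n).filter
      (fun x => x % t = i % t ∨ (n - r < x ∧ x % r = i % r))) :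
    ((Finset.Icc 1 t).powerset.image (fun I => symmDiffs I g)).card = 2 ^ t ∧
    (∀ I ⊆ Finset.Icc 1 t, symmDiffs I g ≠ ∅ →
      ∀ a < n, (symmDiffs I g ∩ cyclicBlock n t a).Nonempty) :=
  stmt5_general n q t r hq hn hrt g hg
end

section
/- Let n, t be positive integers with t ≤ n, and suppose there exists a subgroup G of (𝒫({1,...,n}), Δ) of order 2^t all of whose nonempty elements intersect every cyclic block of length t modulo n. Then any family 𝒜 ⊆ 𝒫({1,...,n}) such that for all A, A' ∈ 𝒜 the complement of A Δ A' contains some cyclic block of length t modulo n satisfies |𝒜| ≤ 2^{n-t}. -/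
open Finset
open scoped symmDiff Classical

/-!
Translating `𝒜` by the subgroup `G` is injective: if `A ∆ g = A' ∆ g'` then `A ∆ A' = g ∆ g'`,
an element of `G` that misses the block of length `t` on which `A` and `A'` agree, hence is `∅`.
So `|𝒜| · 2^t ≤ |𝒫({1,…,n})| = 2^n`.
-/

theorem symmDiff_eq_symmDiff_comm {α : Type*} [GeneralizedBooleanAlgebra α] {a b c d : α}
    (h : a ∆ b = c ∆ d) : a ∆ c = b ∆ d := by
  have hc : c = a ∆ b ∆ d := by rw [h, symmDiff_symmDiff_cancel_right]
  rw [hc, symmDiff_assoc, symmDiff_symmDiff_cancel_left]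

theorem Finset.card_mul_card_le_of_symmDiff_eq_symmDiff {α : Type*} [DecidableEq α]
    {U : Finset α} {𝒜 G : Finset (Finset α)} (h𝒜 : 𝒜 ⊆ U.powerset) (hG : G ⊆ U.powerset)
    (hunique : ∀ A ∈ 𝒜, ∀ A' ∈ 𝒜, ∀ g ∈ G, ∀ g' ∈ G, A ∆ A' = g ∆ g' → g = g') :
    #𝒜 * #G ≤ 2 ^ #U := by
  rw [← card_product, ← card_powerset]
  refine card_le_card_of_injOn (fun p => p.1 ∆ p.2) ?_ ?_
  · rintro ⟨A, g⟩ hAg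
    obtain ⟨hA, hg⟩ := mem_product.1 hAg
    exact mem_powerset.2 <| symmDiff_le_sup.trans <|
      union_subset (mem_powerset.1 (h𝒜 hA)) (mem_powerset.1 (hG hg))
  · rintro ⟨A, g⟩ hAg ⟨A', g'⟩ hAg' (h : A ∆ g = A' ∆ g')
    obtain ⟨hA, hg⟩ := mem_product.1 hAg
    obtain ⟨hA', hg'⟩ := mem_product.1 hAg'
    have hgg' : g = g' := hunique A hA A' hA' g hg g' hg' (symmDiff_eq_symmDiff_comm h)
    subst hgg'
    rw [symmDiff_left_inj.1 h]

theorem stmt6_general (n t : ℕ) (htn : t ≤ n)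
    (G : Finset (Finset ℕ)) (hGsub : G ⊆ (Finset.Icc 1 n).powerset)
    (hGclosed : ∀ g ∈ G, ∀ h ∈ G, g ∆ h ∈ G)
    (hGcard : G.card = 2 ^ t)
    (hGmeet : ∀ g ∈ G, g ≠ ∅ → ∀ a < n, (g ∩ cyclicBlock n t a).Nonempty)
    (𝒜 : Finset (Finset ℕ)) (hA : 𝒜 ⊆ (Finset.Icc 1 n).powerset)
    (hagree : ∀ A ∈ 𝒜, ∀ A' ∈ 𝒜, ∃ a < n, cyclicBlock n t a ∩ (A ∆ A') = ∅) :
    𝒜.card ≤ 2 ^ (n - t) := by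
  have hunique : ∀ A ∈ 𝒜, ∀ A' ∈ 𝒜, ∀ g ∈ G, ∀ g' ∈ G, A ∆ A' = g ∆ g' → g = g' := by
    intro A hA A' hA' g hg g' hg' h
    obtain ⟨a, ha, hdisj⟩ := hagree A hA A' hA'
    by_contra hne
    obtain ⟨x, hx⟩ := hGmeet _ (hGclosed g hg g' hg') (fun h0 => hne (symmDiff_eq_bot.1 h0)) a ha
    have hx' : x ∈ cyclicBlock n t a ∩ (A ∆ A') := by
      rw [h, inter_comm]
      exact hx
    rw [hdisj] at hx'
    exact notMem_empty x hx'
  have hcard := card_mul_card_le_of_symmDiff_eq_symmDiff hA hGsub hunique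
  rw [hGcard, Nat.card_Icc, Nat.add_sub_cancel, ← Nat.sub_add_cancel htn, pow_add] at hcard
  exact Nat.le_of_mul_le_mul_right hcard (by positivity)

theorem stmt6 (n t : ℕ) (ht : 0 < t) (htn : t ≤ n)
    (G : Finset (Finset ℕ)) (hGsub : G ⊆ (Finset.Icc 1 n).powerset)
    (hGzero : ∅ ∈ G) (hGclosed : ∀ g ∈ G, ∀ h ∈ G, g ∆ h ∈ G)
    (hGcard : G.card = 2 ^ t)
    (hGmeet : ∀ g ∈ G, g ≠ ∅ → ∀ a < n, (g ∩ cyclicBlock n t a).Nonempty)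
    (𝒜 : Finset (Finset ℕ)) (hA : 𝒜 ⊆ (Finset.Icc 1 n).powerset)
    (hagree : ∀ A ∈ 𝒜, ∀ A' ∈ 𝒜, ∃ a < n, cyclicBlock n t a ∩ (A ∆ A') = ∅) :
    𝒜.card ≤ 2 ^ (n - t) :=
  stmt6_general n t htn G hGsub hGclosed hGcard hGmeet 𝒜 hA hagree
end

section
/- Let n, t be positive integers with t ≤ n, and let 𝒜 ⊆ 𝒫({1,...,n}) be a family such that for any A, A' ∈ 𝒜 the intersection A ∩ A' contains some cyclic translate modulo n of {1,...,t}. Then |𝒜| ≤ 2^{n-t}. -/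
open Finset
open scoped symmDiff Classical

/-!
Index `{1, …, n}` by `ZMod n`. It suffices to find a `t`-dimensional subspace `K` of `𝔽₂^(ZMod n)`
in which no nonzero vector vanishes on `t` cyclically consecutive coordinates: for `A ≠ A'` in `𝒜`
the difference of the indicator vectors vanishes on the block contained in `A ∩ A'`, so
`A ↦ 1_A + K` is injective on `𝒜` and `|𝒜| ≤ |𝔽₂^n ⧸ K| = 2 ^ (n - t)`.

Such subspaces exist over every field, by a Euclidean algorithm on `(n, t)`: one for `(N, t)`
gives one for `(N + t, t)` by reading coordinates modulo `N`, and the orthogonal complement of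
one for `(n, t)` is one for `(n, n - t)`.
-/

open Module

lemma ZMod.exists_eq_add_natCast_or {n a b : ℕ} [NeZero n] (hab : a + b = n) (s j : ZMod n) :
    (∃ i < a, j = s + i) ∨ (∃ i < b, j = s + a + i) := by
  have hd : (j - s).val < n := ZMod.val_lt _
  have hj : j = s + (j - s).val := by rw [ZMod.natCast_zmod_val]; ring
  by_cases h : (j - s).val < a
  · exact .inl ⟨_, h, hj⟩
  · refine .inr ⟨(j - s).val - a, by omega, ?_⟩
    rw [add_assoc, ← Nat.cast_add, Nat.add_sub_cancel' (by omega), ← hj]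

lemma ZMod.val_add_natCast_of_lt {n : ℕ} [NeZero n] (r : ZMod n) {i : ℕ} (hi : i < n) :
    (r + i).val = (r.val + i) % n := by
  rw [ZMod.val_add, ZMod.val_cast_of_lt hi]

/-- The block is hit in order if it does not wrap past `N`, and as a rotation of
`{0, …, t - 1}` if it does. -/
lemma exists_cyclicBlock_val_cast {N t : ℕ} [NeZero N] [NeZero (N + t)] (r : ZMod (N + t)) :
    ∃ s : ZMod N, ∀ i' < t, ∃ i < t, (((r + i).val : ℕ) : ZMod N) = s + i' := by
  have hr := ZMod.val_lt r
  have hN := NeZero.pos N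
  by_cases hrN : r.val ≤ N
  · refine ⟨r.val, fun i' hi' => ⟨i', hi', ?_⟩⟩
    rw [ZMod.val_add_natCast_of_lt r (by omega), Nat.mod_eq_of_lt (by omega)]
    push_cast; rfl
  · refine ⟨0, fun i' hi' => ?_⟩
    by_cases hwrap : r.val ≤ i' + N
    · refine ⟨i' + N - r.val, by omega, ?_⟩
      rw [ZMod.val_add_natCast_of_lt r (by omega), Nat.mod_eq_of_lt (by omega),
        Nat.add_sub_cancel' hwrap]
      simp
    · refine ⟨i' + (N + t) - r.val, by omega, ?_⟩
      rw [ZMod.val_add_natCast_of_lt r (by omega), Nat.add_sub_cancel' (by omega),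
        Nat.add_mod_right, Nat.mod_eq_of_lt (by omega)]
      simp

section CyclicBlocks

variable {F : Type*} [Field F]

def VanishesOnCyclicBlock {n : ℕ} (t : ℕ) (x : ZMod n → F) : Prop :=
  ∃ s : ZMod n, ∀ i < t, x (s + i) = 0

def CyclicBlocksDetermine {n : ℕ} (t : ℕ) (K : Submodule F (ZMod n → F)) : Prop :=
  ∀ x ∈ K, VanishesOnCyclicBlock t x → x = 0

namespace CyclicBlocksDetermine

theorem exists_add {N t : ℕ} [NeZero N] [NeZero (N + t)] {K : Submodule F (ZMod N → F)}
    (hdet : CyclicBlocksDetermine t K) (hK : finrank F K = t) :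
    ∃ K' : Submodule F (ZMod (N + t) → F), finrank F K' = t ∧ CyclicBlocksDetermine t K' := by
  set g : ZMod (N + t) → ZMod N := fun j => (j.val : ZMod N)
  have hg : Function.Surjective g := fun y => ⟨(y.val : ZMod (N + t)), by
    simp only [g]
    rw [ZMod.val_cast_of_lt (by have := ZMod.val_lt y; omega), ZMod.natCast_zmod_val]⟩
  have hinj := LinearMap.funLeft_injective_of_surjective F F g hg
  refine ⟨K.map (LinearMap.funLeft F F g), ?_, ?_⟩
  · exact (Submodule.equivMapOfInjective _ hinj K).finrank_eq.symm.trans hK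
  · rintro _ ⟨x, hx, rfl⟩ ⟨r, hr⟩
    obtain ⟨s, hs⟩ := exists_cyclicBlock_val_cast (N := N) (t := t) r
    suffices x = 0 by simp [this]
    refine hdet x hx ⟨s, fun i' hi' => ?_⟩
    obtain ⟨i, hi, hgi⟩ := hs i' hi'
    rw [← hgi]
    exact hr i hi

/-- Restriction of `K` to a block is injective, hence bijective by dimension count. -/
lemma exists_mem_eq_ite {n t : ℕ} [NeZero n] {K : Submodule F (ZMod n → F)}
    (hdet : CyclicBlocksDetermine t K) (hK : finrank F K = t) (s : ZMod n) {i₀ : ℕ}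
    (hi₀ : i₀ < t) : ∃ x ∈ K, ∀ i < t, x (s + i) = if i = i₀ then 1 else 0 := by
  let restrict : K →ₗ[F] (Fin t → F) :=
    (LinearMap.pi fun i : Fin t => LinearMap.proj (s + (i : ℕ))) ∘ₗ K.subtype
  have hinj : Function.Injective restrict := by
    rw [← LinearMap.ker_eq_bot, LinearMap.ker_eq_bot']
    intro x hx
    exact Subtype.ext (hdet x x.2 ⟨s, fun i hi => congrFun hx ⟨i, hi⟩⟩)
  have hsurj := (LinearMap.injective_iff_surjective_of_finrank_eq_finrank
    (by rw [hK, finrank_fin_fun])).1 hinj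
  obtain ⟨x, hx⟩ := hsurj (Pi.single ⟨i₀, hi₀⟩ 1)
  refine ⟨x, x.2, fun i hi => ?_⟩
  have := congrFun hx ⟨i, hi⟩
  simp only [restrict, LinearMap.coe_comp, Function.comp_apply, LinearMap.pi_apply,
    LinearMap.coe_proj, Function.eval, Submodule.coe_subtype] at this
  rw [this, Pi.single_apply]
  simp only [Fin.mk.injEq]

/-- The witness is the orthogonal complement of `K` for the dot product: a vector orthogonal to
`K` that vanishes on an `(n - t)`-block is tested against the vectors of `K` that restrict to unit
vectors on the complementary `t`-block. -/
theorem exists_sub {n t : ℕ} [NeZero n] (htn : t ≤ n) {K : Submodule F (ZMod n → F)}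
    (hdet : CyclicBlocksDetermine t K) (hK : finrank F K = t) :
    ∃ K' : Submodule F (ZMod n → F), finrank F K' = n - t ∧
      CyclicBlocksDetermine (n - t) K' := by
  let W := K.map (dotProductEquiv F (ZMod n)).toLinearMap
  refine ⟨W.dualCoannihilator, ?_, ?_⟩
  · have hW : finrank F W = t := by rw [← hK]; exact LinearEquiv.finrank_map_eq _ K
    have := Subspace.finrank_add_finrank_dualCoannihilator_eq W
    rw [hW, finrank_fintype_fun_eq_card, ZMod.card] at this
    omega
  · rintro y hy ⟨s, hs⟩
    have hcover := ZMod.exists_eq_add_natCast_or (Nat.sub_add_cancel htn) s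
    funext j
    rcases hcover j with ⟨i, hi, rfl⟩ | ⟨i₀, hi₀, rfl⟩
    · exact hs i hi
    obtain ⟨x, hxK, hx⟩ := hdet.exists_mem_eq_ite hK (s + (n - t : ℕ)) hi₀
    have hxy : x ⬝ᵥ y = 0 :=
      (Submodule.mem_dualCoannihilator y).1 hy _ (Submodule.mem_map_of_mem hxK)
    rw [dotProduct, Finset.sum_eq_single (s + (n - t : ℕ) + i₀), hx i₀ hi₀, if_pos rfl,
      one_mul] at hxy
    · exact hxy
    · intro k _ hk
      rcases hcover k with ⟨i, hi, rfl⟩ | ⟨i, hi, rfl⟩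
      · rw [hs i hi, mul_zero]
      · rw [hx i hi, if_neg (by rintro rfl; exact hk rfl), zero_mul]
    · simp

end CyclicBlocksDetermine

variable (F) in
theorem exists_cyclicBlocksDetermine {n t : ℕ} (hn : 0 < n) (htn : t ≤ n) :
    ∃ K : Submodule F (ZMod n → F), finrank F K = t ∧ CyclicBlocksDetermine t K := by
  induction n using Nat.strong_induction_on generalizing t with
  | _ n IH =>
  have : NeZero n := ⟨hn.ne'⟩
  have small : ∀ u, 2 * u ≤ n →
      ∃ K : Submodule F (ZMod n → F), finrank F K = u ∧ CyclicBlocksDetermine u K := by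
    intro u hu
    rcases u.eq_zero_or_pos with rfl | hu0
    · exact ⟨⊥, finrank_bot F _, fun x hx _ => (Submodule.mem_bot F).1 hx⟩
    · obtain ⟨N, rfl⟩ : ∃ N, n = N + u := ⟨n - u, by omega⟩
      have hN : 0 < N := by omega
      have : NeZero N := ⟨hN.ne'⟩
      obtain ⟨K, hK, hdet⟩ := IH N (by omega) hN (t := u) (by omega)
      exact hdet.exists_add hK
  by_cases ht : 2 * t ≤ n
  · exact small t ht
  · obtain ⟨K, hK, hdet⟩ := small (n - t) (by omega)
    rw [← Nat.sub_sub_self htn]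
    exact hdet.exists_sub (Nat.sub_le n t) hK

end CyclicBlocks

/-- Coordinate `j : ZMod n` stands for the element `j.val + 1` of `{1, …, n}`. -/
def finsetIndicator (n : ℕ) (A : Finset ℕ) : ZMod n → ZMod 2 :=
  fun j => if j.val + 1 ∈ A then 1 else 0

lemma vanishesOnCyclicBlock_finsetIndicator_sub {n t a : ℕ} [NeZero n] {A A' : Finset ℕ}
    (h : cyclicBlock n t a ⊆ A ∩ A') :
    VanishesOnCyclicBlock t (finsetIndicator n A - finsetIndicator n A') := by
  refine ⟨a, fun i hi => ?_⟩
  have hmem : (((a : ZMod n) + i).val + 1) ∈ A ∩ A' := by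
    refine h (Finset.mem_image.2 ⟨i, Finset.mem_range.2 hi, ?_⟩)
    rw [← Nat.cast_add, ZMod.val_natCast]
  rw [Finset.mem_inter] at hmem
  simp [finsetIndicator, hmem.1, hmem.2]

lemma finsetIndicator_injOn (n : ℕ) [NeZero n] :
    Set.InjOn (finsetIndicator n) ((Finset.Icc 1 n).powerset : Set (Finset ℕ)) := by
  suffices ∀ A ⊆ Finset.Icc 1 n, ∀ A', finsetIndicator n A = finsetIndicator n A' → A ⊆ A' from
    fun A hA A' hA' h => (this A (Finset.mem_powerset.1 hA) A' h).antisymm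
      (this A' (Finset.mem_powerset.1 hA') A h.symm)
  intro A hA A' h x hx
  obtain ⟨hx1, hxn⟩ := Finset.mem_Icc.1 (hA hx)
  have hval : ((x - 1 : ℕ) : ZMod n).val + 1 = x := by
    rw [ZMod.val_cast_of_lt (by omega)]; omega
  have := congrFun h (x - 1 : ℕ)
  simp only [finsetIndicator, hval, hx, if_true] at this
  by_contra hx'
  simp [hx'] at this

theorem stmt7 (n t : ℕ) (ht : 0 < t) (htn : t ≤ n)
    (𝒜 : Finset (Finset ℕ)) (hA : 𝒜 ⊆ (Finset.Icc 1 n).powerset)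
    (hint : ∀ A ∈ 𝒜, ∀ A' ∈ 𝒜, ∃ a < n, cyclicBlock n t a ⊆ A ∩ A') :
    𝒜.card ≤ 2 ^ (n - t) := by
  have hn : 0 < n := ht.trans_le htn
  have : NeZero n := ⟨hn.ne'⟩
  obtain ⟨K, hK, hdet⟩ := exists_cyclicBlocksDetermine (ZMod 2) hn htn
  let code : Finset ℕ → (ZMod n → ZMod 2) ⧸ K := fun A => K.mkQ (finsetIndicator n A)
  have hcode : Set.InjOn code 𝒜 := by
    intro A hA₁ A' hA₂ h
    obtain ⟨a, -, hblock⟩ := hint A hA₁ A' hA₂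
    have hdiff := hdet _ ((Submodule.Quotient.eq K).1 h)
      (vanishesOnCyclicBlock_finsetIndicator_sub hblock)
    exact finsetIndicator_injOn n (hA hA₁) (hA hA₂) (sub_eq_zero.1 hdiff)
  have hquot : finrank (ZMod 2) ((ZMod n → ZMod 2) ⧸ K) = n - t := by
    have := K.finrank_quotient_add_finrank
    rw [hK, finrank_fintype_fun_eq_card, ZMod.card] at this
    omega
  calc 𝒜.card ≤ Nat.card ((ZMod n → ZMod 2) ⧸ K) := by
        rw [Nat.card_eq_fintype_card, ← Finset.card_univ]
        exact Finset.card_le_card_of_injOn code (fun _ _ => Finset.mem_univ _) hcode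
    _ = 2 ^ (n - t) := by rw [Module.natCard_eq_pow_finrank (K := ZMod 2), hquot, Nat.card_zmod]
end

section
/- Let n, t, q, r, r' be positive integers with n = qt + r, r < t, r ∤ t, t ≡ r' (mod r), and r' dividing r. Define g_i for i ≤ t − r' as {x ∈ {1,...,n} : x ≡ i (mod t)} ∪ {x : x > qt, x − qt ≡ i (mod r)}, and for i > t − r' as {x ∈ {1,...,n} : x ≡ i (mod t)} ∪ {x : x > qt, x − qt ≡ i (mod r')}. Then the sets g_i ∩ {1,...,n−r} for i ∈ {1,...,t} are pairwise disjoint, and every nonempty symmetric difference Δ_{i∈I} g_i (I ⊆ {1,...,t} nonempty) intersects every cyclic translate of {1,...,t} modulo n. -/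
open Finset
open scoped symmDiff Classical

/-!
A point `x ≤ q t` lies in exactly those `g i` with `i ≡ x (mod t)`, hence the disjointness. A
symmetric difference contains every point lying in exactly one `g i`, `i ∈ I`, so it suffices
to find such a point in each cyclic block. If the block contains a point `x ≤ q t` with
`x ≡ i (mod t)` for some `i ∈ I`, that point works. Otherwise `I` lies in a window of `r`
consecutive indices, and the point is taken in the tail `q t + y`, `1 ≤ y ≤ r`: with
`y ≡ i (mod r)` when `I ⊆ [1, t - r']`, and otherwise with `y ≡ i (mod r')` for some
`i > t - r'`, placed so low in the block that no index of `I ∩ [1, t - r']` is `≡ y (mod r)`.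
-/

theorem Nat.ModEq.eq_of_mem_Ioc {d L a b : ℕ} (h : a ≡ b [MOD d])
    (ha : a ∈ Ioc L (L + d)) (hb : b ∈ Ioc L (L + d)) : a = b := by
  rw [mem_Ioc] at ha hb
  exact h.eq_of_abs_lt (abs_sub_lt_iff.2 ⟨by omega, by omega⟩)

theorem Nat.exists_mem_Ioc_modEq {d : ℕ} (hd : 0 < d) (L a : ℕ) :
    ∃ y ∈ Ioc L (L + d), y ≡ a [MOD d] := by
  have hdiv := Nat.div_add_mod (L + d - a % d) d
  have hlt := Nat.mod_lt (L + d - a % d) hd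
  have ha := Nat.mod_lt a hd
  refine ⟨a % d + d * ((L + d - a % d) / d), mem_Ioc.2 ⟨by omega, by omega⟩, ?_⟩
  exact Nat.add_modulus_mul_modEq_iff.2 (Nat.mod_modEq a d)

theorem Nat.sub_modEq_of_dvd {d e a : ℕ} (h : d ∣ e) (he : e ≤ a) : a - e ≡ a [MOD d] := by
  simpa [Nat.sub_add_cancel he] using ((Nat.add_modEq_left_iff (a := a - e)).2 h).symm

theorem mem_symmDiffs_iff {g : ℕ → Finset ℕ} {x : ℕ} {I : Finset ℕ} :
    x ∈ symmDiffs I g ↔ Odd #(I.filter (x ∈ g ·)) := by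
  induction I using Finset.induction_on with
  | empty => simp [symmDiffs]
  | @insert a s ha ih =>
    rw [symmDiffs, fold_insert ha, ← symmDiffs, mem_symmDiff, ih, filter_insert]
    by_cases hx : x ∈ g a
    · rw [if_pos hx, card_insert_of_notMem (fun h => ha (mem_filter.1 h).1), Nat.odd_add_one]
      tauto
    · simp [hx]

theorem mem_symmDiffs_of_existsUnique {g : ℕ → Finset ℕ} {x : ℕ} {I : Finset ℕ}
    (h : ∃! i, i ∈ I ∧ x ∈ g i) : x ∈ symmDiffs I g := by
  rw [mem_symmDiffs_iff, card_eq_one_iff_existsUnique.2 (by simpa using h)]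
  exact odd_one

theorem mem_cyclicBlock {n t c x : ℕ} (hx : x ∈ Icc 1 n)
    (h : x ∈ Ioc c (c + t) ∨ x + n ∈ Ioc c (c + t)) : x ∈ cyclicBlock n t c := by
  rw [mem_Icc] at hx
  simp only [cyclicBlock, mem_image, mem_range]
  rcases h with h | h <;> rw [mem_Ioc] at h
  · refine ⟨x - 1 - c, by omega, ?_⟩
    rw [show c + (x - 1 - c) = x - 1 by omega, Nat.mod_eq_of_lt (by omega)]
    omega
  · refine ⟨x + n - 1 - c, by omega, ?_⟩
    rw [show c + (x + n - 1 - c) = x - 1 + n by omega, Nat.add_mod_right,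
      Nat.mod_eq_of_lt (by omega)]
    omega

/-- Membership in `g i` for `x ∈ [1, n]` and `i ∈ [1, t]`, with `k` standing for `t - r'`. -/
structure EuclidPattern (n q t r r' k : ℕ) (g : ℕ → Finset ℕ) : Prop where
  q_pos : 0 < q
  n_eq : n = q * t + r
  t_eq : t = k + r'
  r_pos : 0 < r
  r'_pos : 0 < r'
  r_le_k : r ≤ k
  r_dvd_k : r ∣ k
  r'_dvd_r : r' ∣ r
  mem_low : ∀ x ∈ Icc 1 (q * t), ∀ i ∈ Icc 1 t, x ∈ g i ↔ x ≡ i [MOD t]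
  mem_tail : ∀ y ∈ Icc 1 r, ∀ i ∈ Icc 1 t,
    q * t + y ∈ g i ↔ (i ≤ k ∧ y ≡ i [MOD r]) ∨ (k < i ∧ y ≡ i [MOD r'])

theorem euclidPattern_of_filter {n q t r r' : ℕ} {g : ℕ → Finset ℕ} (hq : 0 < q)
    (hr : 0 < r) (hr' : 0 < r') (hn : n = q * t + r) (hrlt : r < t)
    (hcong : t % r = r' % r) (hr'r : r' ∣ r)
    (hg : ∀ i, g i = (Icc 1 n).filter (fun x => x % t = i % t ∨
      (q * t < x ∧ (x - q * t) % (if i ≤ t - r' then r else r') =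
        i % (if i ≤ t - r' then r else r')))) :
    EuclidPattern n q t r r' (t - r') g := by
  have hr'_le : r' ≤ r := Nat.le_of_dvd hr hr'r
  have hdvd : r ∣ t - r' := (Nat.modEq_iff_dvd' (by omega)).1 hcong.symm
  refine ⟨hq, hn, by omega, hr, hr', Nat.le_of_dvd (by omega) hdvd, hdvd, hr'r, ?_, ?_⟩
  · intro x hx i hi
    rw [mem_Icc] at hx
    have : q * t ≤ n := by omega
    simp only [hg, mem_filter, mem_Icc, Nat.ModEq]
    constructor
    · rintro ⟨-, h | ⟨h, -⟩⟩
      · exact h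
      · omega
    · exact fun h => ⟨⟨hx.1, by omega⟩, Or.inl h⟩
  · intro y hy i hi
    rw [mem_Icc] at hy hi
    have hyt : (q * t + y) % t = y := by
      rw [Nat.mul_comm, Nat.mul_add_mod, Nat.mod_eq_of_lt (by omega)]
    have hit : i % t = if i = t then 0 else i := by
      split_ifs with h
      · rw [h, Nat.mod_self]
      · exact Nat.mod_eq_of_lt (by omega)
    simp only [hg, mem_filter, mem_Icc, hyt, hit, Nat.add_sub_cancel_left, Nat.ModEq]
    have hk : r ≤ t - r' := Nat.le_of_dvd (by omega) hdvd
    by_cases hik : i ≤ t - r'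
    · simp only [hik, if_true, true_and, show ¬ t - r' < i by omega, false_and, or_false,
        show i ≠ t by omega, if_false]
      constructor
      · rintro ⟨-, rfl | ⟨-, h⟩⟩
        · rfl
        · exact h
      · exact fun h => ⟨by omega, Or.inr ⟨by omega, h⟩⟩
    · simp only [hik, if_false, false_and, false_or, show t - r' < i by omega, true_and]
      constructor
      · rintro ⟨-, h | ⟨-, h⟩⟩
        · split_ifs at h <;> omega
        · exact h
      · exact fun h => ⟨by omega, Or.inr ⟨by omega, h⟩⟩

namespace EuclidPattern

variable {n q t r r' k : ℕ} {g : ℕ → Finset ℕ} {I : Finset ℕ}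

theorem bounds (P : EuclidPattern n q t r r' k g) :
    n = q * t + r ∧ t = k + r' ∧ 0 < r' ∧ r' ≤ r ∧ r ≤ k ∧ t ≤ q * t :=
  ⟨P.n_eq, P.t_eq, P.r'_pos, Nat.le_of_dvd P.r_pos P.r'_dvd_r, P.r_le_k,
    Nat.le_mul_of_pos_left t P.q_pos⟩

theorem existsUnique_of_low (P : EuclidPattern n q t r r' k g) (hI : I ⊆ Icc 1 t) {x i : ℕ}
    (hx : x ∈ Icc 1 (q * t)) (hi : i ∈ I) (hxi : x ≡ i [MOD t]) :
    ∃! b, b ∈ I ∧ x ∈ g b := by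
  refine ⟨i, ⟨hi, (P.mem_low x hx i (hI hi)).2 hxi⟩, fun b ⟨hb, hxb⟩ => ?_⟩
  have hb' := mem_Icc.1 (hI hb)
  have hi' := mem_Icc.1 (hI hi)
  exact ((P.mem_low x hx b (hI hb)).1 hxb).symm.trans hxi |>.eq_of_mem_Ioc (L := 0)
    (mem_Ioc.2 ⟨by omega, by omega⟩) (mem_Ioc.2 ⟨by omega, by omega⟩)

theorem existsUnique_of_tail_of_forall_le (P : EuclidPattern n q t r r' k g) (hI : I ⊆ Icc 1 t)
    {L y i : ℕ} (hIL : I ⊆ Ioc L (L + r)) (hIk : ∀ b ∈ I, b ≤ k) (hy : y ∈ Icc 1 r)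
    (hi : i ∈ I) (hyi : y ≡ i [MOD r]) :
    ∃! b, b ∈ I ∧ q * t + y ∈ g b := by
  refine ⟨i, ⟨hi, (P.mem_tail y hy i (hI hi)).2 (Or.inl ⟨hIk i hi, hyi⟩)⟩,
    fun b ⟨hb, hyb⟩ => ?_⟩
  rcases (P.mem_tail y hy b (hI hb)).1 hyb with ⟨-, h⟩ | ⟨h, -⟩
  · exact (h.symm.trans hyi).eq_of_mem_Ioc (hIL hb) (hIL hi)
  · exact absurd (hIk b hb) (by omega)

theorem existsUnique_of_tail_of_lt (P : EuclidPattern n q t r r' k g) (hI : I ⊆ Icc 1 t)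
    {y i : ℕ} (hy : y ∈ Icc 1 r) (hi : i ∈ I) (hki : k < i) (hyi : y ≡ i [MOD r'])
    (hfree : ∀ b ∈ I, b ≤ k → ¬ y ≡ b [MOD r]) :
    ∃! b, b ∈ I ∧ q * t + y ∈ g b := by
  refine ⟨i, ⟨hi, (P.mem_tail y hy i (hI hi)).2 (Or.inr ⟨hki, hyi⟩)⟩,
    fun b ⟨hb, hyb⟩ => ?_⟩
  have hb' := mem_Icc.1 (hI hb)
  have hi' := mem_Icc.1 (hI hi)
  have := P.t_eq
  rcases (P.mem_tail y hy b (hI hb)).1 hyb with ⟨hbk, h⟩ | ⟨hbk, h⟩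
  · exact absurd h (hfree b hb hbk)
  · exact (h.symm.trans hyi).eq_of_mem_Ioc
      (mem_Ioc.2 ⟨hbk, by omega⟩) (mem_Ioc.2 ⟨hki, by omega⟩)

theorem exists_of_add_le (P : EuclidPattern n q t r r' k g) (hI : I ⊆ Icc 1 t)
    (hIne : I.Nonempty) {c : ℕ} (hct : c + t ≤ n) :
    ∃ x ∈ cyclicBlock n t c, ∃! i, i ∈ I ∧ x ∈ g i := by
  obtain ⟨hn, ht, hr', -, hrk, htq⟩ := P.bounds
  by_cases hlow : ∃ i ∈ I, c + t < q * t + i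
  · obtain ⟨i, hi, hci⟩ := hlow
    have hi' := mem_Icc.1 (hI hi)
    obtain ⟨x, hx, hxi⟩ := Nat.exists_mem_Ioc_modEq (by omega : 0 < t) c i
    rw [mem_Ioc] at hx
    have hxq : x ≤ q * t := by
      by_contra h
      have hqi : q * t + i ≡ i [MOD t] := Nat.mul_modulus_add_modEq_iff.2 rfl
      have := (hxi.trans hqi.symm).eq_of_mem_Ioc (L := q * t)
        (mem_Ioc.2 ⟨by omega, by omega⟩) (mem_Ioc.2 ⟨by omega, by omega⟩)
      omega
    exact ⟨x, mem_cyclicBlock (mem_Icc.2 ⟨by omega, by omega⟩) (Or.inl (mem_Ioc.2 hx)),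
      P.existsUnique_of_low hI (mem_Icc.2 ⟨by omega, hxq⟩) hi hxi⟩
  · push Not at hlow
    obtain ⟨i, hi⟩ := hIne
    have hIr : I ⊆ Ioc 0 (0 + r) := fun b hb => by
      have := mem_Icc.1 (hI hb)
      have := hlow b hb
      exact mem_Ioc.2 ⟨by omega, by omega⟩
    have hir := mem_Ioc.1 (hIr hi)
    have := hlow i hi
    exact ⟨q * t + i, mem_cyclicBlock (mem_Icc.2 ⟨by omega, by omega⟩)
      (Or.inl (mem_Ioc.2 ⟨by omega, by omega⟩)),
      P.existsUnique_of_tail_of_forall_le hI hIr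
        (fun b hb => by have := mem_Ioc.1 (hIr hb); omega)
        (mem_Icc.2 ⟨by omega, by omega⟩) hi rfl⟩

theorem exists_of_wrap_low (P : EuclidPattern n q t r r' k g) (hI : I ⊆ Icc 1 t) {c i : ℕ}
    (hc : c < n) (hct : n < c + t) (hi : i ∈ I) (hlow : i + n ≤ c + t ∨ c < q * t + i - t) :
    ∃ x ∈ cyclicBlock n t c, ∃! i, i ∈ I ∧ x ∈ g i := by
  obtain ⟨hn, ht, -, -, hrk, htq⟩ := P.bounds
  have hi' := mem_Icc.1 (hI hi)
  rcases hlow with h | h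
  · exact ⟨i, mem_cyclicBlock (mem_Icc.2 ⟨by omega, by omega⟩)
      (Or.inr (mem_Ioc.2 ⟨by omega, h⟩)),
      P.existsUnique_of_low hI (mem_Icc.2 ⟨by omega, by omega⟩) hi rfl⟩
  · have hxi : q * t + i - t ≡ i [MOD t] :=
      (Nat.sub_modEq_of_dvd dvd_rfl (by omega)).trans (Nat.mul_modulus_add_modEq_iff.2 rfl)
    exact ⟨q * t + i - t, mem_cyclicBlock (mem_Icc.2 ⟨by omega, by omega⟩)
      (Or.inl (mem_Ioc.2 ⟨h, by omega⟩)),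
      P.existsUnique_of_low hI (mem_Icc.2 ⟨by omega, by omega⟩) hi hxi⟩

theorem exists_of_wrap_forall_le (P : EuclidPattern n q t r r' k g) (hI : I ⊆ Icc 1 t)
    (hIne : I.Nonempty) {c : ℕ} (hct : n < c + t)
    (hIL : I ⊆ Ioc (c + t - n) (c + t - n + r)) (hIk : ∀ b ∈ I, b ≤ k) :
    ∃ x ∈ cyclicBlock n t c, ∃! i, i ∈ I ∧ x ∈ g i := by
  obtain ⟨hn, ht, hr', -, hrk, htq⟩ := P.bounds
  obtain ⟨i, hi⟩ := hIne
  have hi' := mem_Ioc.1 (hIL hi)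
  have hik := hIk i hi
  obtain ⟨y, hy, hyi⟩ := Nat.exists_mem_Ioc_modEq P.r_pos 0 i
  have hcy : c < q * t + y := by
    by_contra! hcq
    have hsub : i - (k - r) ≡ i [MOD r] :=
      Nat.sub_modEq_of_dvd (Nat.dvd_sub P.r_dvd_k dvd_rfl) (by omega)
    have := (hyi.trans hsub.symm).eq_of_mem_Ioc hy (mem_Ioc.2 ⟨by omega, by omega⟩)
    omega
  rw [mem_Ioc] at hy
  exact ⟨q * t + y, mem_cyclicBlock (mem_Icc.2 ⟨by omega, by omega⟩)
    (Or.inl (mem_Ioc.2 ⟨hcy, by omega⟩)),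
    P.existsUnique_of_tail_of_forall_le hI hIL hIk (mem_Icc.2 ⟨by omega, by omega⟩) hi hyi⟩

theorem exists_of_wrap_short (P : EuclidPattern n q t r r' k g) (hI : I ⊆ Icc 1 t) {c i : ℕ}
    (hct : n < c + t) (hcr : n ≤ c + r) (hIL : I ⊆ Ioc (c + t - n) (c + t - n + r))
    (hi : i ∈ I) (hki : k < i) :
    ∃ x ∈ cyclicBlock n t c, ∃! i, i ∈ I ∧ x ∈ g i := by
  obtain ⟨hn, ht, hr', hr'r, hrk, htq⟩ := P.bounds
  have hi' := mem_Ioc.1 (hIL hi)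
  have hit := mem_Icc.1 (hI hi)
  have hr'k : r' ∣ k := P.r'_dvd_r.trans P.r_dvd_k
  -- `y` is taken among the lowest `r'` points of the block, all of them in the tail.
  obtain ⟨y, hy, hyi⟩ := Nat.exists_mem_Ioc_modEq P.r'_pos (c - q * t) i
  rw [mem_Ioc] at hy
  have hyr : y ≤ r := by
    by_contra! hry
    have hz : i - k + (r - r') ≡ i [MOD r'] :=
      (Nat.add_modEq_left_iff.2 (Nat.dvd_sub P.r'_dvd_r dvd_rfl)).trans
        (Nat.sub_modEq_of_dvd hr'k (by omega))
    have := (hyi.trans hz.symm).eq_of_mem_Ioc (mem_Ioc.2 hy) (mem_Ioc.2 ⟨by omega, by omega⟩)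
    omega
  have hfree : ∀ b ∈ I, b ≤ k → ¬ y ≡ b [MOD r] := fun b hb hbk hyb => by
    have hb' := mem_Ioc.1 (hIL hb)
    have hsub : b - (k - r) ≡ b [MOD r] :=
      Nat.sub_modEq_of_dvd (Nat.dvd_sub P.r_dvd_k dvd_rfl) (by omega)
    have := (hyb.trans hsub.symm).eq_of_mem_Ioc (L := 0)
      (mem_Ioc.2 ⟨by omega, by omega⟩) (mem_Ioc.2 ⟨by omega, by omega⟩)
    omega
  exact ⟨q * t + y, mem_cyclicBlock (mem_Icc.2 ⟨by omega, by omega⟩)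
    (Or.inl (mem_Ioc.2 ⟨by omega, by omega⟩)),
    P.existsUnique_of_tail_of_lt hI (mem_Icc.2 ⟨by omega, hyr⟩) hi hki hyi hfree⟩

theorem exists_of_wrap_long (P : EuclidPattern n q t r r' k g) (hI : I ⊆ Icc 1 t) {c i : ℕ}
    (hct : n < c + t) (hcr : c + r < n) (hIL : I ⊆ Ioc (c + t - n) (c + t - n + r))
    (hi : i ∈ I) (hki : k < i) :
    ∃ x ∈ cyclicBlock n t c, ∃! i, i ∈ I ∧ x ∈ g i := by
  obtain ⟨hn, ht, hr', hr'r, hrk, htq⟩ := P.bounds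
  have hit := mem_Icc.1 (hI hi)
  have hsub : i - k ≡ i [MOD r] := Nat.sub_modEq_of_dvd P.r_dvd_k (by omega)
  have hfree : ∀ b ∈ I, b ≤ k → ¬ i - k ≡ b [MOD r] := fun b hb hbk hyb => by
    have := (hsub.symm.trans hyb).eq_of_mem_Ioc (hIL hi) (hIL hb)
    omega
  exact ⟨q * t + (i - k), mem_cyclicBlock (mem_Icc.2 ⟨by omega, by omega⟩)
    (Or.inl (mem_Ioc.2 ⟨by omega, by omega⟩)),
    P.existsUnique_of_tail_of_lt hI (mem_Icc.2 ⟨by omega, by omega⟩) hi hki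
      (Nat.sub_modEq_of_dvd (P.r'_dvd_r.trans P.r_dvd_k) (by omega)) hfree⟩

theorem exists_mem_cyclicBlock_existsUnique (P : EuclidPattern n q t r r' k g)
    (hI : I ⊆ Icc 1 t) (hIne : I.Nonempty) {c : ℕ} (hc : c < n) :
    ∃ x ∈ cyclicBlock n t c, ∃! i, i ∈ I ∧ x ∈ g i := by
  rcases le_or_gt (c + t) n with hct | hct
  · exact P.exists_of_add_le hI hIne hct
  by_cases hlow : ∃ i ∈ I, i + n ≤ c + t ∨ c < q * t + i - t
  · obtain ⟨i, hi, h⟩ := hlow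
    exact P.exists_of_wrap_low hI hc hct hi h
  push Not at hlow
  have hIL : I ⊆ Ioc (c + t - n) (c + t - n + r) := fun b hb => by
    have := hlow b hb
    have := P.n_eq
    exact mem_Ioc.2 ⟨by omega, by omega⟩
  by_cases hk : ∃ i ∈ I, k < i
  · obtain ⟨i, hi, hki⟩ := hk
    rcases le_or_gt n (c + r) with hcr | hcr
    · exact P.exists_of_wrap_short hI hct hcr hIL hi hki
    · exact P.exists_of_wrap_long hI hct hcr hIL hi hki
  · push Not at hk
    exact P.exists_of_wrap_forall_le hI hIne hct hIL hk

theorem disjoint_inter_Icc (P : EuclidPattern n q t r r' k g) {i j : ℕ} (hi : i ∈ Icc 1 t)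
    (hj : j ∈ Icc 1 t) (hij : i ≠ j) :
    Disjoint (g i ∩ Icc 1 (n - r)) (g j ∩ Icc 1 (n - r)) := by
  rw [disjoint_left]
  intro x hxi hxj
  rw [mem_inter, show n - r = q * t by rw [P.n_eq]; omega] at hxi hxj
  have hxi := (P.mem_low x hxi.2 i hi).1 hxi.1
  have hxj := (P.mem_low x hxj.2 j hj).1 hxj.1
  rw [mem_Icc] at hi hj
  exact hij ((hxi.symm.trans hxj).eq_of_mem_Ioc (L := 0)
    (mem_Ioc.2 ⟨by omega, by omega⟩) (mem_Ioc.2 ⟨by omega, by omega⟩))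

end EuclidPattern

theorem stmt19_general (n q t r r' : ℕ) (hq : 0 < q) (hr : 0 < r)
    (hr' : 0 < r') (hn : n = q * t + r) (hrlt : r < t)
    (hcong : t % r = r' % r) (hr'r : r' ∣ r)
    (g : ℕ → Finset ℕ)
    (hg1 : ∀ i, i ≤ t - r' → g i = (Finset.Icc 1 n).filter
      (fun x => x % t = i % t ∨ (q * t < x ∧ (x - q * t) % r = i % r)))
    (hg2 : ∀ i, t - r' < i → g i = (Finset.Icc 1 n).filter
      (fun x => x % t = i % t ∨ (q * t < x ∧ (x - q * t) % r' = i % r'))) :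
    (∀ i ∈ Finset.Icc 1 t, ∀ j ∈ Finset.Icc 1 t, i ≠ j →
      Disjoint (g i ∩ Finset.Icc 1 (n - r)) (g j ∩ Finset.Icc 1 (n - r))) ∧
    (∀ I ⊆ Finset.Icc 1 t, I ≠ ∅ → symmDiffs I g ≠ ∅ →
      ∀ c < n, (symmDiffs I g ∩ cyclicBlock n t c).Nonempty) := by
  have hg : ∀ i, g i = (Icc 1 n).filter (fun x => x % t = i % t ∨
      (q * t < x ∧ (x - q * t) % (if i ≤ t - r' then r else r') =
        i % (if i ≤ t - r' then r else r'))) := fun i => by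
    by_cases h : i ≤ t - r'
    · simpa only [h, if_true] using hg1 i h
    · simpa only [h, if_false] using hg2 i (by omega)
  have P := euclidPattern_of_filter hq hr hr' hn hrlt hcong hr'r hg
  refine ⟨fun i hi j hj hij => P.disjoint_inter_Icc hi hj hij, fun I hI hIne _ c hc => ?_⟩
  obtain ⟨x, hx, hxI⟩ :=
    P.exists_mem_cyclicBlock_existsUnique hI (nonempty_iff_ne_empty.2 hIne) hc
  exact ⟨x, mem_inter.2 ⟨mem_symmDiffs_of_existsUnique hxI, hx⟩⟩

theorem stmt19 (n q t r r' : ℕ) (hq : 0 < q) (ht : 0 < t) (hr : 0 < r)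
    (hr' : 0 < r') (hn : n = q * t + r) (hrlt : r < t) (hndvd : ¬ r ∣ t)
    (hcong : t % r = r' % r) (hr'r : r' ∣ r)
    (g : ℕ → Finset ℕ)
    (hg1 : ∀ i, i ≤ t - r' → g i = (Finset.Icc 1 n).filter
      (fun x => x % t = i % t ∨ (q * t < x ∧ (x - q * t) % r = i % r)))
    (hg2 : ∀ i, t - r' < i → g i = (Finset.Icc 1 n).filter
      (fun x => x % t = i % t ∨ (q * t < x ∧ (x - q * t) % r' = i % r'))) :
    (∀ i ∈ Finset.Icc 1 t, ∀ j ∈ Finset.Icc 1 t, i ≠ j →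
      Disjoint (g i ∩ Finset.Icc 1 (n - r)) (g j ∩ Finset.Icc 1 (n - r))) ∧
    (∀ I ⊆ Finset.Icc 1 t, I ≠ ∅ → symmDiffs I g ≠ ∅ →
      ∀ c < n, (symmDiffs I g ∩ cyclicBlock n t c).Nonempty) :=
  stmt19_general n q t r r' hq hr hr' hn hrlt hcong hr'r g hg1 hg2
end
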